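/- For every integer m ≥ 2, the polynomial identity T^{m-1} = 1 + ∑_{j=2}^{m} s^m_j · (T-1)(T-2)⋯(T-j+1)/j! holds in ℚ[T], where s^m_j is the number of surjections from {1,...,m} onto {1,...,j}. -/

import Mathlib

/-! Sorting the maps `Fin m → Fin n` by their image gives `n ^ m = ∑ j, (n choose j) s^m_j`, that
is, `X ^ m = ∑ j, s^m_j / j! · X (X - 1) ⋯ (X - j + 1)` at every natural number, hence in `K[X]`.
As `s^m_0 = 0` and `s^m_1 = 1`, cancelling the common factor `X` leaves the claim. -/

open Polynomial

/-- `s^m_j`: the number of surjective maps from an `m`-element set onto a `j`-element set. -/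
def surjCount (m j : ℕ) : ℕ :=
  Fintype.card {f : Fin m → Fin j // Function.Surjective f}

open Finset Function

lemma surjCount_eq_zero_of_lt {m j : ℕ} (h : m < j) : surjCount m j = 0 :=
  Fintype.card_eq_zero_iff.2
    ⟨fun ⟨f, hf⟩ => absurd (Fintype.card_le_of_surjective f hf) (by simpa using h)⟩

lemma surjCount_zero_right {m : ℕ} (hm : m ≠ 0) : surjCount m 0 = 0 :=
  Fintype.card_eq_zero_iff.2 ⟨fun ⟨f, _⟩ => (f ⟨0, Nat.pos_of_ne_zero hm⟩).elim0⟩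

lemma surjCount_one_right {m : ℕ} (hm : m ≠ 0) : surjCount m 1 = 1 :=
  Fintype.card_eq_one_iff.2
    ⟨⟨fun _ => 0, fun _ => ⟨⟨0, Nat.pos_of_ne_zero hm⟩, Subsingleton.elim _ _⟩⟩,
      fun _ => Subsingleton.elim _ _⟩

lemma card_surjective_eq_surjCount (m : ℕ) (β : Type*) [Fintype β] [DecidableEq β] :
    Fintype.card {f : Fin m → β // Surjective f} = surjCount m (Fintype.card β) :=
  Fintype.card_congr <| (Equiv.arrowCongr (Equiv.refl _) (Fintype.equivFin β)).subtypeEquiv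
    fun f => (Equiv.comp_surjective f _).symm

def imageEqEquivSurjective (α : Type*) {β : Type*} [Fintype α] [DecidableEq β] (S : Finset β) :
    {f : α → β // univ.image f = S} ≃ {g : α → S // Surjective g} where
  toFun f := ⟨fun a => ⟨f.1 a, (Finset.ext_iff.1 f.2 _).1 (mem_image_of_mem f.1 (mem_univ a))⟩,
    fun y => by
      obtain ⟨a, -, ha⟩ := mem_image.1 ((Finset.ext_iff.1 f.2 y).2 y.2)
      exact ⟨a, Subtype.ext ha⟩⟩
  invFun g := ⟨fun a => g.1 a, by
    apply Finset.coe_injective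
    rw [coe_image, coe_univ, Set.image_univ, Set.range_comp' Subtype.val g.1, g.2.range_eq,
      Set.image_univ, Subtype.range_coe]⟩
  left_inv _ := rfl
  right_inv _ := rfl

lemma card_image_eq_surjCount (m : ℕ) {β : Type*} [Fintype β] [DecidableEq β] (S : Finset β) :
    Fintype.card {f : Fin m → β // univ.image f = S} = surjCount m #S := by
  rw [Fintype.card_congr (imageEqEquivSurjective _ S), card_surjective_eq_surjCount,
    Fintype.card_coe]

theorem pow_eq_sum_choose_mul_surjCount (m n : ℕ) :
    n ^ m = ∑ j ∈ range (m + 1), n.choose j * surjCount m j := by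
  have fiberwise : n ^ m = ∑ S : Finset (Fin n), surjCount m #S := calc
    n ^ m = Fintype.card (Fin m → Fin n) := by simp
    _ = Fintype.card (Σ S : Finset (Fin n), {f : Fin m → Fin n // univ.image f = S}) :=
      Fintype.card_congr (Equiv.sigmaFiberEquiv _).symm
    _ = ∑ S : Finset (Fin n), surjCount m #S := by
      simp only [Fintype.card_sigma, card_image_eq_surjCount]
  rw [fiberwise, ← powerset_univ, sum_powerset_apply_card, card_univ, Fintype.card_fin]
  simp only [smul_eq_mul]
  rw [← eventually_constant_sum (N := n + 1) (n := n + m + 1)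
      (fun j hj => by rw [Nat.choose_eq_zero_of_lt (by omega), zero_mul]) (by omega),
    eventually_constant_sum (N := m + 1)
      (fun j hj => by rw [surjCount_eq_zero_of_lt (by omega), mul_zero]) (by omega)]

theorem X_pow_eq_sum_surjCount_mul_descPochhammer (K : Type*) [Field K] [CharZero K] (m : ℕ) :
    (X : K[X]) ^ m = ∑ j ∈ range (m + 1),
      C ((surjCount m j : K) / (Nat.factorial j : K)) * descPochhammer K j := by
  refine eq_of_infinite_eval_eq _ _ (Set.infinite_range_of_injective Nat.cast_injective |>.mono ?_)
  rintro _ ⟨n, rfl⟩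
  simp only [Set.mem_ofPred_eq, eval_pow, eval_X, eval_finsetSum, eval_mul, eval_C,
    descPochhammer_eval_eq_descFactorial, Nat.descFactorial_eq_factorial_mul_choose]
  rw [← Nat.cast_pow, pow_eq_sum_choose_mul_surjCount m n]
  push_cast
  refine sum_congr rfl fun j _ => ?_
  have : (j.factorial : K) ≠ 0 := Nat.cast_ne_zero.2 j.factorial_ne_zero
  field_simp

lemma descPochhammer_succ_eq_X_mul_prod_Icc (R : Type*) [CommRing R] (n : ℕ) :
    descPochhammer R (n + 1) = X * ∏ i ∈ Icc 1 n, (X - C (i : R)) := by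
  induction n with
  | zero => simp
  | succ n ih =>
    rw [descPochhammer_succ_right, ih, prod_Icc_succ_top (by omega), map_natCast, mul_assoc]

/-- For every integer `m ≥ 2`, in `ℚ[T]` one has
`T^{m-1} = 1 + ∑_{j=2}^{m} s^m_j · (T-1)(T-2)⋯(T-j+1)/j!`. -/
theorem pow_pred_eq_one_add_sum (m : ℕ) (hm : 2 ≤ m) :
    (X : ℚ[X]) ^ (m - 1) =
      1 + ∑ j ∈ Finset.Icc 2 m,
        C ((surjCount m j : ℚ) / (Nat.factorial j : ℚ)) *
          ∏ i ∈ Finset.Icc 1 (j - 1), (X - C (i : ℚ)) := by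
  have range_eq : range (m + 1) = insert 0 (insert 1 (Icc 2 m)) := by
    ext; simp only [mem_range, mem_insert, mem_Icc]; omega
  refine mul_left_cancel₀ (X_ne_zero (R := ℚ)) ?_
  rw [← pow_succ', Nat.sub_add_cancel (by omega), X_pow_eq_sum_surjCount_mul_descPochhammer,
    range_eq, sum_insert (by simp), sum_insert (by simp), surjCount_zero_right (by omega),
    surjCount_one_right (by omega), mul_add, mul_sum]
  simp only [Nat.cast_zero, zero_div, map_zero, zero_mul, zero_add, Nat.cast_one,
    Nat.factorial_one, div_one, map_one, one_mul, descPochhammer_one, mul_one]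
  refine congrArg _ (sum_congr rfl fun j hj => ?_)
  obtain ⟨k, rfl⟩ : ∃ k, j = k + 1 := ⟨j - 1, by grind⟩
  rw [descPochhammer_succ_eq_X_mul_prod_Icc, Nat.add_sub_cancel, mul_left_comm]
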